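/- arXiv:1607.00190 — 2 statements merged into one kernel-verified Lean document; each statement's English description precedes it below -/
import Mathlib

section
/- Under the hypotheses of the Loeffel–Martin identity (ψ solves −ħ²ψ'' + qψ = Eψ with q real, decay at +∞ making ∫_y^∞|ψ|² finite), if Im E ≠ 0 and ψ is not identically zero near +∞, then ψ(y) ≠ 0 for every y ∈ ℝ. -/
/-!
The flux `Im (conj ψ · ψ')` of a solution has derivative `-(Im E / ħ²) |ψ|²`. It is integrable
near `+∞` (bounded by `(|ψ|² + |ψ'|²) / 2`) with integrable derivative, hence tends to `0`, and
integrating from `y` to `∞` gives `ħ² Im (conj ψ(y) ψ'(y)) = Im E ∫_y^∞ |ψ|²`. At a zero `y` of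
`ψ` the left side vanishes, while the right side does not, because `ψ` is continuous and not
identically zero on `(y, ∞)`.
-/

open MeasureTheory Filter Set Topology ComplexConjugate

theorem setIntegral_pos_of_continuous_of_ne_zero {X : Type*} [TopologicalSpace X]
    [MeasurableSpace X] [OpensMeasurableSpace X] {μ : Measure X} [μ.IsOpenPosMeasure]
    {f : X → ℝ} {s : Set X} {x : X} (hs : IsOpen s) (hf : Continuous f) (hf₀ : 0 ≤ f)
    (hfi : IntegrableOn f s μ) (hx : x ∈ s) (hfx : f x ≠ 0) : 0 < ∫ x in s, f x ∂μ :=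
  (setIntegral_pos_iff_support_of_nonneg_ae (ae_of_all _ hf₀) hfi).2 <|
    (hf.isOpen_support.inter hs).measure_pos μ ⟨x, hfx, hx⟩

noncomputable def flux (ψ : ℝ → ℂ) (x : ℝ) : ℝ := (conj (ψ x) * deriv ψ x).im

theorem flux_eq_zero_of_eq_zero {ψ : ℝ → ℂ} {x : ℝ} (h : ψ x = 0) : flux ψ x = 0 := by
  simp [flux, h]

theorem abs_flux_le (ψ : ℝ → ℂ) (x : ℝ) :
    |flux ψ x| ≤ (‖ψ x‖ ^ 2 + ‖deriv ψ x‖ ^ 2) / 2 := by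
  calc |flux ψ x| ≤ ‖conj (ψ x) * deriv ψ x‖ := Complex.abs_im_le_norm _
    _ = ‖ψ x‖ * ‖deriv ψ x‖ := by rw [norm_mul, Complex.norm_conj]
    _ ≤ _ := by nlinarith [sq_nonneg (‖ψ x‖ - ‖deriv ψ x‖)]

theorem continuous_flux {ψ : ℝ → ℂ} (hψ : Continuous ψ) (hψ' : Continuous (deriv ψ)) :
    Continuous (flux ψ) := by
  unfold flux; fun_prop

theorem integrableOn_flux {ψ : ℝ → ℂ} {s : Set ℝ} (hψ : Continuous ψ)
    (hψ' : Continuous (deriv ψ)) (hψs : IntegrableOn (fun x => ‖ψ x‖ ^ 2) s)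
    (hψ's : IntegrableOn (fun x => ‖deriv ψ x‖ ^ 2) s) : IntegrableOn (flux ψ) s :=
  ((hψs.add hψ's).div_const 2).mono' (continuous_flux hψ hψ').aestronglyMeasurable.restrict <|
    ae_of_all _ (abs_flux_le ψ)

/-- The derivative of `Im (conj ψ · ψ')` only sees `ψ''`, since `conj ψ' · ψ'` is real. -/
theorem hasDerivAt_flux {ψ : ℝ → ℂ} {x : ℝ} (hψ : DifferentiableAt ℝ ψ x)
    (hψ' : DifferentiableAt ℝ (deriv ψ) x) :
    HasDerivAt (flux ψ) (conj (ψ x) * deriv (deriv ψ) x).im x := by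
  have h : HasDerivAt (flux ψ)
      (Complex.imCLM (star (deriv ψ x) * deriv ψ x + star (ψ x) * deriv (deriv ψ) x)) x :=
    Complex.imCLM.hasFDerivAt.comp_hasDerivAt x (hψ.hasDerivAt.star.mul hψ'.hasDerivAt)
  convert h using 1
  simp only [Complex.mul_im, Complex.conj_re, Complex.conj_im, neg_mul, RCLike.star_def,
    Complex.imCLM_apply, Complex.add_im, right_eq_add]
  ring

section Schrodinger

variable {hbar : ℝ} {q : ℝ → ℝ} {E : ℂ} {ψ : ℝ → ℂ}

theorem im_conj_mul_eq_of_schrodinger (hhbar : hbar ≠ 0) {x : ℝ}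
    (hODE : -(hbar : ℂ) ^ 2 * deriv (deriv ψ) x + (q x : ℂ) * ψ x = E * ψ x) :
    (conj (ψ x) * deriv (deriv ψ) x).im = -E.im / hbar ^ 2 * ‖ψ x‖ ^ 2 := by
  have hψ'' : deriv (deriv ψ) x = ((q x : ℂ) - E) / (hbar : ℂ) ^ 2 * ψ x := by
    have hb : (hbar : ℂ) ^ 2 ≠ 0 := pow_ne_zero 2 (Complex.ofReal_ne_zero.2 hhbar)
    rw [div_mul_eq_mul_div, eq_div_iff hb]
    linear_combination -hODE
  rw [hψ'', mul_left_comm, Complex.conj_mul']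
  simp only [← Complex.ofReal_pow, Complex.im_mul_ofReal, Complex.div_ofReal_im, Complex.sub_im,
    Complex.ofReal_im]
  ring

theorem hasDerivAt_flux_of_schrodinger (hhbar : hbar ≠ 0) (hψ : ContDiff ℝ 2 ψ)
    (hODE : ∀ x, -(hbar : ℂ) ^ 2 * deriv (deriv ψ) x + (q x : ℂ) * ψ x = E * ψ x) (x : ℝ) :
    HasDerivAt (flux ψ) (-E.im / hbar ^ 2 * ‖ψ x‖ ^ 2) x :=
  im_conj_mul_eq_of_schrodinger hhbar (hODE x) ▸
    hasDerivAt_flux (hψ.differentiable (by norm_num) x) (hψ.differentiable_deriv_two x)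

theorem tendsto_flux_atTop_zero {a : ℝ} (hhbar : hbar ≠ 0) (hψ : ContDiff ℝ 2 ψ)
    (hODE : ∀ x, -(hbar : ℂ) ^ 2 * deriv (deriv ψ) x + (q x : ℂ) * ψ x = E * ψ x)
    (hψL2 : IntegrableOn (fun x => ‖ψ x‖ ^ 2) (Ioi a))
    (hψ'L2 : IntegrableOn (fun x => ‖deriv ψ x‖ ^ 2) (Ioi a)) :
    Tendsto (flux ψ) atTop (𝓝 0) :=
  tendsto_zero_of_hasDerivAt_of_integrableOn_Ioi
    (fun x _ => hasDerivAt_flux_of_schrodinger hhbar hψ hODE x) (hψL2.const_mul _)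
    (integrableOn_flux hψ.continuous (hψ.continuous_deriv (by norm_num)) hψL2 hψ'L2)

/-- The Loeffel–Martin identity. -/
theorem sq_mul_flux_eq_im_mul_integral_Ioi (hhbar : hbar ≠ 0) (hψ : ContDiff ℝ 2 ψ)
    (hODE : ∀ x, -(hbar : ℂ) ^ 2 * deriv (deriv ψ) x + (q x : ℂ) * ψ x = E * ψ x)
    (hlim : Tendsto (flux ψ) atTop (𝓝 0)) {y : ℝ}
    (hψL2 : IntegrableOn (fun x => ‖ψ x‖ ^ 2) (Ioi y)) :
    hbar ^ 2 * flux ψ y = E.im * ∫ x in Ioi y, ‖ψ x‖ ^ 2 := by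
  have h := integral_Ioi_of_hasDerivAt_of_tendsto'
    (fun x _ => hasDerivAt_flux_of_schrodinger hhbar hψ hODE x) (hψL2.const_mul _) hlim
  rw [integral_const_mul] at h
  field_simp at h
  linarith

end Schrodinger

theorem stmt_8_general (hbar : ℝ) (hhbar : 0 < hbar) (q : ℝ → ℝ)
    (E : ℂ) (ψ : ℝ → ℂ) (hC2 : ContDiff ℝ 2 ψ)
    (hODE : ∀ x : ℝ, -(hbar : ℂ) ^ 2 * deriv (deriv ψ) x + (q x : ℂ) * ψ x = E * ψ x)
    (hψ'L2 : MeasureTheory.IntegrableOn (fun s => ‖deriv ψ s‖ ^ 2) (Set.Ici (0 : ℝ)))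
    (hint : ∀ y : ℝ, MeasureTheory.IntegrableOn (fun s => ‖ψ s‖ ^ 2) (Set.Ici y))
    (hImE : E.im ≠ 0)
    (hnontriv : ∀ y : ℝ, ∃ s : ℝ, y < s ∧ ψ s ≠ 0) :
    ∀ y : ℝ, ψ y ≠ 0 := by
  intro y hy
  have hlim : Tendsto (flux ψ) atTop (𝓝 0) :=
    tendsto_flux_atTop_zero hhbar.ne' hC2 hODE ((hint 0).mono_set Ioi_subset_Ici_self)
      (hψ'L2.mono_set Ioi_subset_Ici_self)
  have hψL2 := (hint y).mono_set Ioi_subset_Ici_self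
  have hidentity := sq_mul_flux_eq_im_mul_integral_Ioi hhbar.ne' hC2 hODE hlim hψL2
  obtain ⟨s, hys, hs⟩ := hnontriv y
  have hpos : 0 < ∫ x in Ioi y, ‖ψ x‖ ^ 2 :=
    setIntegral_pos_of_continuous_of_ne_zero isOpen_Ioi (by fun_prop)
      (fun _ => by positivity) hψL2 hys (by simpa using hs)
  rw [flux_eq_zero_of_eq_zero hy, mul_zero] at hidentity
  exact hImE ((mul_eq_zero.1 hidentity.symm).resolve_right hpos.ne')

/-- under the hypotheses of the Loeffel–Martin identity, if Im E ≠ 0 and ψ is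
not identically zero near +∞, then ψ never vanishes on ℝ. -/
theorem stmt_8 (hbar : ℝ) (hhbar : 0 < hbar) (q : ℝ → ℝ) (hq : Continuous q)
    (E : ℂ) (ψ : ℝ → ℂ) (hC2 : ContDiff ℝ 2 ψ)
    (hODE : ∀ x : ℝ, -(hbar : ℂ) ^ 2 * deriv (deriv ψ) x + (q x : ℂ) * ψ x = E * ψ x)
    (hψL2 : MeasureTheory.IntegrableOn (fun s => ‖ψ s‖ ^ 2) (Set.Ici (0 : ℝ)))
    (hψ'L2 : MeasureTheory.IntegrableOn (fun s => ‖deriv ψ s‖ ^ 2) (Set.Ici (0 : ℝ)))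
    (hint : ∀ y : ℝ, MeasureTheory.IntegrableOn (fun s => ‖ψ s‖ ^ 2) (Set.Ici y))
    (hImE : E.im ≠ 0)
    (hnontriv : ∀ y : ℝ, ∃ s : ℝ, y < s ∧ ψ s ≠ 0) :
    ∀ y : ℝ, ψ y ≠ 0 :=
  stmt_8_general hbar hhbar q E ψ hC2 hODE hψ'L2 hint hImE hnontriv
end

section
/- Let ψ : ℝ → ℂ be twice differentiable, V_y(x) = y(y² − 3x²) + i·x(x² − 3y²) for a fixed y ∈ ℝ, and suppose −ψ'' + V_y·ψ = E·ψ with E > 0 real, with ψ, ψ' decaying fast enough at ±∞ so all integrals converge. Then for every x with x ≥ √3·|y|: Im(conjugate(ψ(x))·ψ'(x)) = −∫_x^∞ (s² − 3y²)·s·|ψ(s)|² ds, and this quantity is strictly negative provided ψ does not vanish identically on (x, ∞). -/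
/-!
The quantity `Im (conj ψ · ψ')` is a probability current: differentiating it and substituting
`ψ'' = (V - E) ψ` leaves only `Im V · |ψ|²`, because `|ψ'|²` and `E |ψ|²` are real. Integrating
from `x` to `+∞`, where the current vanishes, gives the integral formula. For the translated cubic,
`Im V_y(s) = s (s² - 3y²)` is nonnegative for `s ≥ √3 |y|` and positive beyond, so the integral
is positive as soon as `ψ` is somewhere nonzero on `(x, ∞)`.
-/

open MeasureTheory Set Filter Topology ComplexConjugate

theorem setIntegral_pos_of_continuousOn_of_nonneg {α : Type*} [TopologicalSpace α]
    [MeasurableSpace α] [OpensMeasurableSpace α] {μ : Measure α} [μ.IsOpenPosMeasure]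
    {f : α → ℝ} {U : Set α} (hU : IsOpen U) (hf : ContinuousOn f U) (hint : IntegrableOn f U μ)
    (hnn : ∀ x ∈ U, 0 ≤ f x) {x₀ : α} (hx₀ : x₀ ∈ U) (hfx₀ : f x₀ ≠ 0) :
    0 < ∫ x in U, f x ∂μ := by
  rw [setIntegral_pos_iff_support_of_nonneg_ae (ae_restrict_of_forall_mem hU.measurableSet hnn)
    hint]
  have hsupp : U ∩ f ⁻¹' {0}ᶜ ⊆ Function.support f ∩ U := fun x hx => ⟨hx.2, hx.1⟩
  exact ((hf.isOpen_inter_preimage hU isOpen_compl_singleton).measure_pos μ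
    ⟨x₀, hx₀, hfx₀⟩).trans_le (measure_mono hsupp)

namespace Complex

theorem im_conj_mul_mul_self (w z : ℂ) : (conj z * (w * z)).im = w.im * ‖z‖ ^ 2 := by
  rw [mul_left_comm, conj_mul', ← ofReal_pow, im_mul_ofReal]

theorem hasDerivAt_im_conj_mul {f f' : ℝ → ℂ} {f'' : ℂ} {x : ℝ} (hf : HasDerivAt f (f' x) x)
    (hf' : HasDerivAt f' f'' x) :
    HasDerivAt (fun t => (conj (f t) * f' t).im) (conj (f x) * f'').im x := by
  have hprod : HasDerivAt (fun t => conj (f t) * f' t)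
      (conj (f' x) * f' x + conj (f x) * f'') x := hf.star.mul hf'
  have him : HasDerivAt (fun t => (conj (f t) * f' t).im)
      (conj (f' x) * f' x + conj (f x) * f'').im x :=
    imCLM.hasFDerivAt.comp_hasDerivAt x hprod
  rwa [add_im, conj_mul', ← ofReal_pow, ofReal_im, zero_add] at him

end Complex

section Current

variable {V : ℝ → ℂ} {E : ℝ} {ψ : ℝ → ℂ}

theorem hasDerivAt_im_conj_mul_deriv_of_schrodinger (hψ : ContDiff ℝ 2 ψ)
    (hODE : ∀ x, -deriv (deriv ψ) x + V x * ψ x = E * ψ x) (x : ℝ) :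
    HasDerivAt (fun t => (conj (ψ t) * deriv ψ t).im) ((V x).im * ‖ψ x‖ ^ 2) x := by
  have hψ' : ContDiff ℝ 1 (deriv ψ) := ContDiff.deriv' (n := 1) hψ
  have hψ'' : deriv (deriv ψ) x = (V x - E) * ψ x := by linear_combination -hODE x
  convert Complex.hasDerivAt_im_conj_mul (hψ.differentiable two_ne_zero x).hasDerivAt
    (hψ'.differentiable one_ne_zero x).hasDerivAt using 1
  rw [hψ'', Complex.im_conj_mul_mul_self, Complex.sub_im, Complex.ofReal_im, sub_zero]

theorem im_conj_mul_deriv_eq_neg_integral_of_schrodinger (hψ : ContDiff ℝ 2 ψ)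
    (hODE : ∀ x, -deriv (deriv ψ) x + V x * ψ x = E * ψ x)
    (hdecay : Tendsto (fun s => conj (ψ s) * deriv ψ s) atTop (𝓝 0)) {x : ℝ}
    (hint : IntegrableOn (fun s => (V s).im * ‖ψ s‖ ^ 2) (Ioi x)) :
    (conj (ψ x) * deriv ψ x).im = -∫ s in Ioi x, (V s).im * ‖ψ s‖ ^ 2 := by
  have hdecay_im : Tendsto (fun s => (conj (ψ s) * deriv ψ s).im) atTop (𝓝 0) :=
    (Complex.continuous_im.tendsto' 0 0 Complex.zero_im).comp hdecay
  rw [integral_Ioi_of_hasDerivAt_of_tendsto'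
    (fun s _ => hasDerivAt_im_conj_mul_deriv_of_schrodinger hψ hODE s) hint hdecay_im]
  ring

end Current

section Cubic

variable {y s : ℝ}

theorem sqrt_three_mul_abs_eq_sqrt : √3 * |y| = √(3 * y ^ 2) := by
  rw [Real.sqrt_mul zero_le_three, Real.sqrt_sq_eq_abs]

theorem sq_sub_three_mul_sq_mul_nonneg (h : √3 * |y| ≤ s) : 0 ≤ (s ^ 2 - 3 * y ^ 2) * s := by
  rw [sqrt_three_mul_abs_eq_sqrt, Real.sqrt_le_iff] at h
  exact mul_nonneg (sub_nonneg.2 h.2) h.1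

theorem sq_sub_three_mul_sq_mul_pos (h : √3 * |y| < s) : 0 < (s ^ 2 - 3 * y ^ 2) * s := by
  have hs : 0 < s := (by positivity : 0 ≤ √3 * |y|).trans_lt h
  rw [sqrt_three_mul_abs_eq_sqrt, Real.sqrt_lt' hs] at h
  exact mul_pos (sub_pos.2 h) hs

end Cubic

theorem stmt_9_general (y : ℝ) (E : ℝ) (ψ : ℝ → ℂ) (hC2 : ContDiff ℝ 2 ψ)
    (Vy : ℝ → ℂ)
    (hVy : ∀ x : ℝ, Vy x = ((y * (y ^ 2 - 3 * x ^ 2) : ℝ) : ℂ)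
      + Complex.I * ((x * (x ^ 2 - 3 * y ^ 2) : ℝ) : ℂ))
    (hODE : ∀ x : ℝ, -deriv (deriv ψ) x + Vy x * ψ x = (E : ℂ) * ψ x)
    (hdecay : Filter.Tendsto (fun s => starRingEnd ℂ (ψ s) * deriv ψ s)
      Filter.atTop (nhds 0))
    (hint : ∀ x : ℝ, MeasureTheory.IntegrableOn
      (fun s => (s ^ 2 - 3 * y ^ 2) * s * ‖ψ s‖ ^ 2) (Set.Ici x)) :
    ∀ x : ℝ, Real.sqrt 3 * |y| ≤ x →
      ((starRingEnd ℂ (ψ x) * deriv ψ x).im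
          = -∫ s in Set.Ici x, (s ^ 2 - 3 * y ^ 2) * s * ‖ψ s‖ ^ 2) ∧
      ((∃ s ∈ Set.Ioi x, ψ s ≠ 0) → (starRingEnd ℂ (ψ x) * deriv ψ x).im < 0) := by
  intro x hx
  have hIm : ∀ s, (Vy s).im = (s ^ 2 - 3 * y ^ 2) * s := fun s => by
    rw [hVy, Complex.add_im, Complex.ofReal_im, Complex.I_mul_im, Complex.ofReal_re]; ring
  have hcurrent := im_conj_mul_deriv_eq_neg_integral_of_schrodinger hC2 hODE hdecay
    (x := x) (by simpa only [hIm] using (hint x).mono_set Ioi_subset_Ici_self)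
  simp only [hIm] at hcurrent
  rw [integral_Ici_eq_integral_Ioi]
  refine ⟨hcurrent, ?_⟩
  rintro ⟨s₀, hs₀, hψs₀⟩
  rw [hcurrent, neg_lt_zero]
  have hψ := hC2.continuous
  refine setIntegral_pos_of_continuousOn_of_nonneg isOpen_Ioi (by fun_prop)
    ((hint x).mono_set Ioi_subset_Ici_self)
    (fun s hs => mul_nonneg (sq_sub_three_mul_sq_mul_nonneg (hx.trans hs.out.le)) (by positivity))
    hs₀ ?_
  exact (mul_pos (sq_sub_three_mul_sq_mul_pos (hx.trans_lt hs₀)) (by positivity)).ne'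

/-- Loeffel–Martin for the translated cubic: if -ψ'' + V_yψ = Eψ with E > 0,
V_y(x) = y(y² - 3x²) + ix(x² - 3y²), with decay at +∞, then for x ≥ √3|y|,
Im(conj(ψ(x))ψ'(x)) = -∫_x^∞ (s² - 3y²)s|ψ(s)|² ds, strictly negative if ψ ≢ 0 on (x,∞). -/
theorem stmt_9 (y : ℝ) (E : ℝ) (hE : 0 < E) (ψ : ℝ → ℂ) (hC2 : ContDiff ℝ 2 ψ)
    (Vy : ℝ → ℂ)
    (hVy : ∀ x : ℝ, Vy x = ((y * (y ^ 2 - 3 * x ^ 2) : ℝ) : ℂ)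
      + Complex.I * ((x * (x ^ 2 - 3 * y ^ 2) : ℝ) : ℂ))
    (hODE : ∀ x : ℝ, -deriv (deriv ψ) x + Vy x * ψ x = (E : ℂ) * ψ x)
    (hdecay : Filter.Tendsto (fun s => starRingEnd ℂ (ψ s) * deriv ψ s)
      Filter.atTop (nhds 0))
    (hint : ∀ x : ℝ, MeasureTheory.IntegrableOn
      (fun s => (s ^ 2 - 3 * y ^ 2) * s * ‖ψ s‖ ^ 2) (Set.Ici x)) :
    ∀ x : ℝ, Real.sqrt 3 * |y| ≤ x →
      ((starRingEnd ℂ (ψ x) * deriv ψ x).im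
          = -∫ s in Set.Ici x, (s ^ 2 - 3 * y ^ 2) * s * ‖ψ s‖ ^ 2) ∧
      ((∃ s ∈ Set.Ioi x, ψ s ≠ 0) → (starRingEnd ℂ (ψ x) * deriv ψ x).im < 0) :=
  stmt_9_general y E ψ hC2 Vy hVy hODE hdecay hint
end
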